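/- arXiv:1701.08230 — 2 statements merged into one kernel-verified Lean document; each statement's English description precedes it below -/
import Mathlib

section
/- Fix c with 0 < c < 1 and δ ≥ 0, and suppose that for every group a ∈ G the conditional law of p(X) given g(X) = a has positive density on [0,1] and μ(Y = 0, g(X) = a) > 0. Let d be a decision rule whose group-wise false positive rates satisfy |FPR_a(d) − FPR_b(d)| ≤ δ for all a, b ∈ G, where FPR_a(d) = E[d(X) | Y = 0, g(X) = a]. If there is no family of thresholds (t_a)_{a∈G} in [0,1] with d(X) = 1{p(X) ≥ t_{g(X)}} almost surely, then there exists a decision rule d' with FPR_a(d') = FPR_a(d) for every a ∈ G (so d' also satisfies the relaxed constraint) and u(d',c) > u(d,c). -/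
/-!
Since `E[1{Y = 0} f(X)] = E[(1 - p(X)) f(X)]`, the false positive mass of a rule `e` on a group
is `∫ (1 - p) e` over that group. On each group `p(X)` has no atoms, so
`t ↦ ∫ (1 - p) 1{t ≤ p}` is continuous, vanishes at `t = 1` and dominates `∫ (1 - p) d` at
`t = 0`: by the intermediate value theorem a threshold `t_a` gives a rule `d'` with the same
false positive rate as `d`. As in the Neyman–Pearson lemma, `(p - t_a)(d' - d) ≥ 0` pointwise,
and since `(1 - p)(d' - d)` integrates to zero this integral equals `(1 - t_a) ∫ p (d' - d)`;
so `∫ p (d' - d) ≥ 0` on every group, with equality only if `d = d'` a.e. there. The same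
identity with `c` in place of `t_a` shows that the utility gain is `(1 - c) ∫ p (d' - d) > 0`.
-/

open MeasureTheory ProbabilityTheory Set

noncomputable section

/-- A probability law on ℝ has positive density on `[0,1]`. -/
def PosDensity01 (ν : Measure ℝ) : Prop :=
  ∃ φ : ℝ → ENNReal,
    ν = volume.withDensity φ ∧
    (∀ᵐ x ∂(volume.restrict (Icc (0:ℝ) 1)), 0 < φ x) ∧
    (∀ᵐ x ∂(volume : Measure ℝ), x ∉ Icc (0:ℝ) 1 → φ x = 0)

/-- The group-wise false positive rate `FPR_a(d) = E[d(X) | Y = 0, g(X) = a]`. -/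
def FPR {Ω 𝒳 G : Type*} [MeasurableSpace Ω]
    (μ : Measure Ω) (X : Ω → 𝒳) (Y : Ω → ℝ) (g : 𝒳 → G) (d : 𝒳 → ℝ) (a : G) : ℝ :=
  (∫ ω in {ω | Y ω = 0 ∧ g (X ω) = a}, d (X ω) ∂μ)
    / (μ {ω | Y ω = 0 ∧ g (X ω) = a}).toReal

def thresholdRule {𝒳 G : Type*} (g : 𝒳 → G) (p : 𝒳 → ℝ) (t : G → ℝ) (x : 𝒳) : ℝ :=
  if t (g x) ≤ p x then 1 else 0

theorem measurable_thresholdRule {𝒳 G : Type*} [MeasurableSpace 𝒳] [Countable G]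
    [MeasurableSpace G] [MeasurableSingletonClass G] {g : 𝒳 → G} (hg : Measurable g)
    {p : 𝒳 → ℝ} (hp : Measurable p) (t : G → ℝ) : Measurable (thresholdRule g p t) :=
  Measurable.ite (measurableSet_le ((measurable_of_countable t).comp hg) hp) measurable_const
    measurable_const

theorem thresholdRule_mem_Icc {𝒳 G : Type*} (g : 𝒳 → G) (p : 𝒳 → ℝ) (t : G → ℝ) (x : 𝒳) :
    thresholdRule g p t x ∈ Icc (0:ℝ) 1 := by
  unfold thresholdRule; split_ifs <;> simp

section Threshold

variable {α : Type*} [MeasurableSpace α] {ν : Measure α} {q : α → ℝ}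

theorem norm_le_one_of_mem_Icc {x : ℝ} (hx : x ∈ Icc (0:ℝ) 1) : ‖x‖ ≤ 1 :=
  (Real.norm_of_nonneg hx.1).trans_le hx.2

theorem integrable_mul_of_mem_Icc [IsFiniteMeasure ν] {f g : α → ℝ} (hf : AEMeasurable f ν)
    (hg : AEMeasurable g ν) (hf01 : ∀ ω, f ω ∈ Icc (0:ℝ) 1) (hg01 : ∀ ω, g ω ∈ Icc (0:ℝ) 1) :
    Integrable (fun ω => f ω * g ω) ν :=
  .of_mem_Icc 0 1 (hf.mul hg) (ae_of_all _ fun ω => unitInterval.mul_mem (hf01 ω) (hg01 ω))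

theorem integrable_mul_sub_of_mem_Icc [IsFiniteMeasure ν] {w e e' : α → ℝ}
    (hw : AEStronglyMeasurable w ν) {C : ℝ} (hwC : ∀ ω, ‖w ω‖ ≤ C) (he : AEMeasurable e ν)
    (he01 : ∀ ω, e ω ∈ Icc (0:ℝ) 1) (he' : AEMeasurable e' ν) (he'01 : ∀ ω, e' ω ∈ Icc (0:ℝ) 1) :
    Integrable (fun ω => w ω * (e' ω - e ω)) ν :=
  ((Integrable.of_mem_Icc 0 1 he' (ae_of_all _ he'01)).sub
    (.of_mem_Icc 0 1 he (ae_of_all _ he01))).bdd_mul hw (ae_of_all _ hwC)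

theorem continuous_integral_mul_ite_le {f : α → ℝ} (hf : Integrable f ν) (hq : Measurable q)
    (hatom : ∀ x, ∀ᵐ ω ∂ν, q ω ≠ x) :
    Continuous fun t : ℝ => ∫ ω, f ω * (if t ≤ q ω then 1 else 0) ∂ν := by
  refine continuous_iff_continuousAt.2 fun t₀ =>
    continuousAt_of_dominated (bound := fun ω => ‖f ω‖) ?_ ?_ hf.norm ?_
  · exact .of_forall fun t => hf.aestronglyMeasurable.mul
      (Measurable.ite (measurableSet_le measurable_const hq) measurable_const
        measurable_const).aestronglyMeasurable
  · exact .of_forall fun t => ae_of_all _ fun ω => by split_ifs <;> simp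
  · filter_upwards [hatom t₀] with ω hω
    rcases hω.lt_or_gt with hlt | hgt
    · refine (continuousAt_const (y := 0)).congr
        (Filter.mem_of_superset (Ioi_mem_nhds hlt) fun t ht => ?_)
      simp [not_le.2 (show q ω < t from ht)]
    · refine (continuousAt_const (y := f ω)).congr
        (Filter.mem_of_superset (Iio_mem_nhds hgt) fun t ht => ?_)
      simp [(show t < q ω from ht).le]

theorem exists_threshold_integral_eq [IsFiniteMeasure ν] (hq : Measurable q)
    (hq01 : ∀ ω, q ω ∈ Icc (0:ℝ) 1) {e : α → ℝ} (he : Measurable e)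
    (he01 : ∀ ω, e ω ∈ Icc (0:ℝ) 1) (hatom : ∀ x, ∀ᵐ ω ∂ν, q ω ≠ x) :
    ∃ t ∈ Icc (0:ℝ) 1, ∫ ω, (1 - q ω) * (if t ≤ q ω then 1 else 0) ∂ν
      = ∫ ω, (1 - q ω) * e ω ∂ν := by
  have hw01 : ∀ ω, 1 - q ω ∈ Icc (0:ℝ) 1 := fun ω => Icc.mem_iff_one_sub_mem.1 (hq01 ω)
  have hw : Integrable (fun ω => 1 - q ω) ν :=
    .of_mem_Icc 0 1 (by fun_prop) (ae_of_all _ hw01)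
  have hH1 : ∫ ω, (1 - q ω) * (if (1:ℝ) ≤ q ω then 1 else 0) ∂ν = 0 :=
    integral_eq_zero_of_ae <| ae_of_all _ fun ω => by
      by_cases h : (1:ℝ) ≤ q ω
      · simp [le_antisymm (hq01 ω).2 h]
      · simp [h]
  have hlow : 0 ≤ ∫ ω, (1 - q ω) * e ω ∂ν :=
    integral_nonneg fun ω => mul_nonneg (hw01 ω).1 (he01 ω).1
  have hhigh : ∫ ω, (1 - q ω) * e ω ∂ν
      ≤ ∫ ω, (1 - q ω) * (if (0:ℝ) ≤ q ω then 1 else 0) ∂ν := by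
    simp only [(hq01 _).1, if_true, mul_one]
    exact integral_mono (integrable_mul_of_mem_Icc hw.aemeasurable he.aemeasurable hw01 he01) hw
      fun ω => mul_le_of_le_one_right (hw01 ω).1 (he01 ω).2
  obtain ⟨t, ht, hHt⟩ := intermediate_value_Icc' zero_le_one
    (continuous_integral_mul_ite_le hw hq hatom).continuousOn ⟨hH1.trans_le hlow, hhigh⟩
  exact ⟨t, ht, hHt⟩

theorem sub_mul_ite_sub_nonneg {x t y : ℝ} (hy : y ∈ Icc (0:ℝ) 1) :
    0 ≤ (x - t) * ((if t ≤ x then 1 else 0) - y) := by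
  split_ifs with h
  · exact mul_nonneg (sub_nonneg.2 h) (sub_nonneg.2 hy.2)
  · exact mul_nonneg_of_nonpos_of_nonpos (by linarith [not_le.1 h]) (by linarith [hy.1])

theorem integral_sub_const_mul_eq {Δ : α → ℝ} (hΔ : Integrable Δ ν)
    (hqΔ : Integrable (fun ω => q ω * Δ ω) ν) (hbal : ∫ ω, (1 - q ω) * Δ ω ∂ν = 0) (t : ℝ) :
    ∫ ω, (q ω - t) * Δ ω ∂ν = (1 - t) * ∫ ω, q ω * Δ ω ∂ν := by
  have hrest : Integrable (fun ω => (1 - q ω) * Δ ω) ν :=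
    (hΔ.sub hqΔ).congr (ae_of_all _ fun ω => by simp only [Pi.sub_apply]; ring)
  calc ∫ ω, (q ω - t) * Δ ω ∂ν = ∫ ω, (q ω * Δ ω - t * Δ ω) ∂ν := by
        congr 1; ext ω; ring
    _ = ∫ ω, q ω * Δ ω ∂ν - t * ∫ ω, (q ω * Δ ω + (1 - q ω) * Δ ω) ∂ν := by
        rw [integral_sub hqΔ (hΔ.const_mul t), integral_const_mul]; congr 3; ext ω; ring
    _ = (1 - t) * ∫ ω, q ω * Δ ω ∂ν := by rw [integral_add hqΔ hrest, hbal]; ring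

theorem ae_eq_or_integral_mul_sub_pos [IsFiniteMeasure ν] (hq : Measurable q)
    (hq01 : ∀ ω, q ω ∈ Icc (0:ℝ) 1) {e e' : α → ℝ} (he : Measurable e)
    (he01 : ∀ ω, e ω ∈ Icc (0:ℝ) 1) (he' : Measurable e') (he'01 : ∀ ω, e' ω ∈ Icc (0:ℝ) 1)
    {t : ℝ} (ht : t ≤ 1) (hthr : ∀ᵐ ω ∂ν, e' ω = if t ≤ q ω then 1 else 0)
    (hatom : ∀ᵐ ω ∂ν, q ω ≠ t) (hbal : ∫ ω, (1 - q ω) * (e' ω - e ω) ∂ν = 0) :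
    e' =ᵐ[ν] e ∨ 0 < ∫ ω, q ω * (e' ω - e ω) ∂ν := by
  have hΔ : Integrable (fun ω => e' ω - e ω) ν :=
    (Integrable.of_mem_Icc 0 1 he'.aemeasurable (ae_of_all _ he'01)).sub
      (.of_mem_Icc 0 1 he.aemeasurable (ae_of_all _ he01))
  have hqΔ : Integrable (fun ω => q ω * (e' ω - e ω)) ν :=
    integrable_mul_sub_of_mem_Icc hq.aestronglyMeasurable
      (fun ω => norm_le_one_of_mem_Icc (hq01 ω)) he.aemeasurable he01 he'.aemeasurable he'01
  have hgapΔ : Integrable (fun ω => (q ω - t) * (e' ω - e ω)) ν :=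
    integrable_mul_sub_of_mem_Icc (hq.sub measurable_const).aestronglyMeasurable (C := 1 + ‖t‖)
      (fun ω => (norm_sub_le _ _).trans (by linarith [norm_le_one_of_mem_Icc (hq01 ω)]))
      he.aemeasurable he01 he'.aemeasurable he'01
  have hgap_nonneg : 0 ≤ᵐ[ν] fun ω => (q ω - t) * (e' ω - e ω) := by
    filter_upwards [hthr] with ω hω
    rw [hω]
    exact sub_mul_ite_sub_nonneg (he01 ω)
  by_cases heq : e' =ᵐ[ν] e
  · exact Or.inl heq
  refine Or.inr (pos_of_mul_pos_right ?_ (sub_nonneg.2 ht))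
  rw [← integral_sub_const_mul_eq hΔ hqΔ hbal t]
  refine (integral_nonneg_of_ae hgap_nonneg).lt_of_ne fun hzero => heq ?_
  filter_upwards [(integral_eq_zero_iff_of_nonneg_ae hgap_nonneg hgapΔ).1 hzero.symm, hatom]
    with ω h0 hne
  rcases mul_eq_zero.1 h0 with h | h
  · exact absurd (sub_eq_zero.1 h) hne
  · exact sub_eq_zero.1 h

variable {G : Type*} {Z : α → G}

theorem ae_of_forall_ae_restrict_preimage_singleton [Countable G] {P : α → Prop}
    (h : ∀ a, ∀ᵐ ω ∂ν.restrict (Z ⁻¹' {a}), P ω) : ∀ᵐ ω ∂ν, P ω := by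
  rw [← ae_restrict_iUnion_iff, ← preimage_iUnion, iUnion_of_singleton, preimage_univ,
    Measure.restrict_univ] at h
  exact h

variable [MeasurableSpace G]

theorem integral_eq_sum_setIntegral_preimage_singleton [Fintype G] [MeasurableSingletonClass G]
    (hZ : Measurable Z) {F : α → ℝ} (hF : Integrable F ν) :
    ∫ ω, F ω ∂ν = ∑ a, ∫ ω in Z ⁻¹' {a}, F ω ∂ν := by
  rw [← integral_iUnion_fintype (fun a => hZ (measurableSet_singleton a))
    (fun a b hab => disjoint_singleton.2 hab |>.preimage Z) fun a => hF.integrableOn,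
    ← preimage_iUnion, iUnion_of_singleton, preimage_univ, Measure.restrict_univ]

theorem ae_restrict_thresholdRule_eq [MeasurableSingletonClass G] (hZ : Measurable Z)
    (t : G → ℝ) (a : G) :
    ∀ᵐ ω ∂ν.restrict (Z ⁻¹' {a}), thresholdRule Z q t ω = if t a ≤ q ω then 1 else 0 :=
  ae_restrict_of_forall_mem (hZ (measurableSet_singleton a)) fun ω hω => by
    simp only [thresholdRule, show Z ω = a from hω]

theorem exists_thresholdRule_balanced [IsFiniteMeasure ν] [Countable G]
    [MeasurableSingletonClass G] (hZ : Measurable Z) (hq : Measurable q)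
    (hq01 : ∀ ω, q ω ∈ Icc (0:ℝ) 1) {e : α → ℝ} (he : Measurable e)
    (he01 : ∀ ω, e ω ∈ Icc (0:ℝ) 1)
    (hatom : ∀ a x, ∀ᵐ ω ∂ν.restrict (Z ⁻¹' {a}), q ω ≠ x) :
    ∃ t : G → ℝ, (∀ a, t a ∈ Icc (0:ℝ) 1) ∧
      ∀ a, ∫ ω in Z ⁻¹' {a}, (1 - q ω) * (thresholdRule Z q t ω - e ω) ∂ν = 0 := by
  choose t ht01 ht using fun a =>
    exists_threshold_integral_eq (ν := ν.restrict (Z ⁻¹' {a})) hq hq01 he he01 (hatom a)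
  refine ⟨t, ht01, fun a => ?_⟩
  have hw01 : ∀ ω, 1 - q ω ∈ Icc (0:ℝ) 1 := fun ω => Icc.mem_iff_one_sub_mem.1 (hq01 ω)
  simp_rw [mul_sub]
  rw [integral_sub (integrable_mul_of_mem_Icc (by fun_prop)
      (measurable_thresholdRule hZ hq t).aemeasurable hw01 (thresholdRule_mem_Icc Z q t))
    (integrable_mul_of_mem_Icc (by fun_prop) he.aemeasurable hw01 he01), sub_eq_zero, ← ht a]
  exact integral_congr_ae
    ((ae_restrict_thresholdRule_eq (q := q) hZ t a).mono fun ω h => by simp only [h])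

theorem integral_mul_thresholdRule_sub_pos [IsFiniteMeasure ν] [Fintype G]
    [MeasurableSingletonClass G] (hZ : Measurable Z) (hq : Measurable q)
    (hq01 : ∀ ω, q ω ∈ Icc (0:ℝ) 1) {e : α → ℝ} (he : Measurable e)
    (he01 : ∀ ω, e ω ∈ Icc (0:ℝ) 1) (hatom : ∀ a x, ∀ᵐ ω ∂ν.restrict (Z ⁻¹' {a}), q ω ≠ x)
    {t : G → ℝ} (ht : ∀ a, t a ≤ 1)
    (hbal : ∀ a, ∫ ω in Z ⁻¹' {a}, (1 - q ω) * (thresholdRule Z q t ω - e ω) ∂ν = 0)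
    (hne : ¬ ∀ᵐ ω ∂ν, e ω = thresholdRule Z q t ω) :
    0 < ∫ ω, q ω * (thresholdRule Z q t ω - e ω) ∂ν := by
  have hgain : ∀ a, thresholdRule Z q t =ᵐ[ν.restrict (Z ⁻¹' {a})] e
      ∨ 0 < ∫ ω in Z ⁻¹' {a}, q ω * (thresholdRule Z q t ω - e ω) ∂ν := fun a =>
    ae_eq_or_integral_mul_sub_pos hq hq01 he he01 (measurable_thresholdRule hZ hq t)
      (thresholdRule_mem_Icc Z q t) (ht a) (ae_restrict_thresholdRule_eq (q := q) hZ t a)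
      (hatom a (t a)) (hbal a)
  have hJ : ∀ a, 0 ≤ ∫ ω in Z ⁻¹' {a}, q ω * (thresholdRule Z q t ω - e ω) ∂ν := fun a =>
    (hgain a).elim (fun h => (integral_eq_zero_of_ae (h.mono fun ω hω => by simp [hω])).ge)
      le_of_lt
  rw [integral_eq_sum_setIntegral_preimage_singleton hZ (integrable_mul_sub_of_mem_Icc
    hq.aestronglyMeasurable (fun ω => norm_le_one_of_mem_Icc (hq01 ω)) he.aemeasurable he01
    (measurable_thresholdRule hZ hq t).aemeasurable (thresholdRule_mem_Icc Z q t))]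
  refine (Finset.sum_nonneg fun a _ => hJ a).lt_of_ne fun hsum => hne ?_
  have hzero := (Finset.sum_eq_zero_iff_of_nonneg fun a _ => hJ a).1 hsum.symm
  refine ae_of_forall_ae_restrict_preimage_singleton fun a =>
    ((hgain a).resolve_right ?_).mono fun ω h => h.symm
  rw [hzero a (Finset.mem_univ a)]
  exact lt_irrefl 0

theorem integral_one_sub_mul_sub_eq_zero_of_forall [IsFiniteMeasure ν] [Fintype G]
    [MeasurableSingletonClass G] (hZ : Measurable Z) (hq : Measurable q)
    (hq01 : ∀ ω, q ω ∈ Icc (0:ℝ) 1) {e e' : α → ℝ} (he : Measurable e)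
    (he01 : ∀ ω, e ω ∈ Icc (0:ℝ) 1) (he' : Measurable e') (he'01 : ∀ ω, e' ω ∈ Icc (0:ℝ) 1)
    (hbal : ∀ a, ∫ ω in Z ⁻¹' {a}, (1 - q ω) * (e' ω - e ω) ∂ν = 0) :
    ∫ ω, (1 - q ω) * (e' ω - e ω) ∂ν = 0 := by
  rw [integral_eq_sum_setIntegral_preimage_singleton hZ (integrable_mul_sub_of_mem_Icc
    (w := fun ω => 1 - q ω) (by fun_prop)
    (fun ω => norm_le_one_of_mem_Icc (Icc.mem_iff_one_sub_mem.1 (hq01 ω))) he.aemeasurable he01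
    he'.aemeasurable he'01)]
  exact Finset.sum_eq_zero fun a _ => hbal a

end Threshold

theorem PosDensity01.measure_singleton {ν : Measure ℝ} (h : PosDensity01 ν) (x : ℝ) :
    ν {x} = 0 := by
  obtain ⟨φ, rfl, -, -⟩ := h
  exact MeasureTheory.measure_singleton x

theorem ae_restrict_ne_of_map_cond_singleton {Ω : Type*} [MeasurableSpace Ω] {μ : Measure Ω}
    [IsFiniteMeasure μ] {q : Ω → ℝ} (hq : Measurable q) {s : Set Ω} (hs : MeasurableSet s)
    {x : ℝ} (hx : Measure.map q (cond μ s) {x} = 0) : ∀ᵐ ω ∂μ.restrict s, q ω ≠ x := by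
  rw [Measure.map_apply hq (measurableSet_singleton x), cond_apply hs,
    mul_eq_zero, or_iff_right (ENNReal.inv_ne_zero.2 (measure_ne_top μ s))] at hx
  rw [ae_iff, Measure.restrict_apply' hs, inter_comm]
  simp only [ne_eq, not_not]
  exact hx

def IsRiskScore {Ω 𝒳 : Type*} [MeasurableSpace Ω] [MeasurableSpace 𝒳] (μ : Measure Ω)
    (X : Ω → 𝒳) (Y : Ω → ℝ) (p : 𝒳 → ℝ) : Prop :=
  ∀ f : 𝒳 → ℝ, Measurable f → (∃ C, ∀ x, |f x| ≤ C) →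
    ∫ ω, Y ω * f (X ω) ∂μ = ∫ ω, p (X ω) * f (X ω) ∂μ

namespace IsRiskScore

variable {Ω 𝒳 : Type*} [MeasurableSpace Ω] [MeasurableSpace 𝒳] {μ : Measure Ω}
  [IsFiniteMeasure μ] {X : Ω → 𝒳} {Y : Ω → ℝ} {p : 𝒳 → ℝ}

theorem setIntegral_label_zero_inter_preimage (hrisk : IsRiskScore μ X Y p)
    (hX : Measurable X) (hY : Measurable Y) (hY01 : ∀ ω, Y ω = 0 ∨ Y ω = 1) (hp : Measurable p)
    (hp01 : ∀ x, p x ∈ Icc (0:ℝ) 1) {S : Set 𝒳} (hS : MeasurableSet S) {f : 𝒳 → ℝ}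
    (hf : Measurable f) {C : ℝ} (hfC : ∀ x, |f x| ≤ C) :
    ∫ ω in {ω | Y ω = 0} ∩ X ⁻¹' S, f (X ω) ∂μ
      = ∫ ω in X ⁻¹' S, (1 - p (X ω)) * f (X ω) ∂μ := by
  set k := S.indicator f
  have hk : Measurable k := hf.indicator hS
  have hkC : ∀ x, |k x| ≤ C := fun x => by
    by_cases hx : x ∈ S
    · simpa [k, hx] using hfC x
    · simpa [k, hx] using (abs_nonneg _).trans (hfC x)
  have hkX : Integrable (fun ω => k (X ω)) μ :=
    .of_bound (hk.comp hX).aestronglyMeasurable C (ae_of_all _ fun ω => hkC (X ω))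
  have hYkX : Integrable (fun ω => Y ω * k (X ω)) μ :=
    hkX.bdd_mul hY.aestronglyMeasurable (c := 1) (ae_of_all _ fun ω => by
      rcases hY01 ω with h | h <;> simp [h])
  have hpkX : Integrable (fun ω => p (X ω) * k (X ω)) μ :=
    hkX.bdd_mul (hp.comp hX).aestronglyMeasurable (c := 1) (ae_of_all _ fun ω =>
      norm_le_one_of_mem_Icc (hp01 (X ω)))
  have hS0 : MeasurableSet ({ω | Y ω = 0} ∩ X ⁻¹' S) :=
    (hY (measurableSet_singleton 0)).inter (hX hS)
  calc ∫ ω in {ω | Y ω = 0} ∩ X ⁻¹' S, f (X ω) ∂μ = ∫ ω, (1 - Y ω) * k (X ω) ∂μ := by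
        rw [← integral_indicator hS0]
        congr 1; ext ω
        by_cases hXω : X ω ∈ S <;> rcases hY01 ω with h | h <;> simp [k, hXω, h]
    _ = ∫ ω, k (X ω) ∂μ - ∫ ω, Y ω * k (X ω) ∂μ := by
        rw [← integral_sub hkX hYkX]; congr 1; ext ω; ring
    _ = ∫ ω, k (X ω) ∂μ - ∫ ω, p (X ω) * k (X ω) ∂μ := by rw [hrisk k hk ⟨C, hkC⟩]
    _ = ∫ ω in X ⁻¹' S, (1 - p (X ω)) * f (X ω) ∂μ := by
        rw [← integral_sub hkX hpkX, ← integral_indicator (hX hS)]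
        congr 1; ext ω
        by_cases hXω : X ω ∈ S <;> simp [k, hXω, sub_mul]

theorem FPR_eq_of_setIntegral_eq_zero {G : Type*} [MeasurableSpace G]
    [MeasurableSingletonClass G] (hrisk : IsRiskScore μ X Y p) (hX : Measurable X)
    (hY : Measurable Y) (hY01 : ∀ ω, Y ω = 0 ∨ Y ω = 1) (hp : Measurable p)
    (hp01 : ∀ x, p x ∈ Icc (0:ℝ) 1) {g : 𝒳 → G} (hg : Measurable g) {d d' : 𝒳 → ℝ}
    (hd : Measurable d) (hd01 : ∀ x, d x ∈ Icc (0:ℝ) 1) (hd' : Measurable d')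
    (hd'01 : ∀ x, d' x ∈ Icc (0:ℝ) 1) {a : G}
    (hbal : ∫ ω in X ⁻¹' (g ⁻¹' {a}), (1 - p (X ω)) * (d' (X ω) - d (X ω)) ∂μ = 0) :
    FPR μ X Y g d' a = FPR μ X Y g d a := by
  have hlabel : ∀ f : 𝒳 → ℝ, Measurable f → (∀ x, f x ∈ Icc (0:ℝ) 1) →
      ∫ ω in {ω | Y ω = 0 ∧ g (X ω) = a}, f (X ω) ∂μ
        = ∫ ω in X ⁻¹' (g ⁻¹' {a}), (1 - p (X ω)) * f (X ω) ∂μ := fun f hf hf01 =>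
    hrisk.setIntegral_label_zero_inter_preimage hX hY hY01 hp hp01
      (hg (measurableSet_singleton a)) hf (C := 1) fun x => by
        simpa using norm_le_one_of_mem_Icc (hf01 x)
  have hw01 : ∀ ω, 1 - p (X ω) ∈ Icc (0:ℝ) 1 := fun ω => Icc.mem_iff_one_sub_mem.1 (hp01 _)
  simp_rw [mul_sub] at hbal
  rw [integral_sub (integrable_mul_of_mem_Icc (by fun_prop) (by fun_prop) hw01 fun ω => hd'01 _)
    (integrable_mul_of_mem_Icc (by fun_prop) (by fun_prop) hw01 fun ω => hd01 _),
    sub_eq_zero] at hbal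
  rw [FPR, FPR, hlabel d' hd' hd'01, hlabel d hd hd01, hbal]

theorem utility_sub_eq (hrisk : IsRiskScore μ X Y p) (hX : Measurable X) (hp : Measurable p)
    (hp01 : ∀ x, p x ∈ Icc (0:ℝ) 1) {d d' : 𝒳 → ℝ} (hd : Measurable d)
    (hd01 : ∀ x, d x ∈ Icc (0:ℝ) 1) (hd' : Measurable d') (hd'01 : ∀ x, d' x ∈ Icc (0:ℝ) 1)
    (hbal : ∫ ω, (1 - p (X ω)) * (d' (X ω) - d (X ω)) ∂μ = 0) (c : ℝ) :
    ((∫ ω, Y ω * d' (X ω) ∂μ) - c * ∫ ω, d' (X ω) ∂μ)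
      - ((∫ ω, Y ω * d (X ω) ∂μ) - c * ∫ ω, d (X ω) ∂μ)
      = (1 - c) * ∫ ω, p (X ω) * (d' (X ω) - d (X ω)) ∂μ := by
  have hbound : ∀ {f : 𝒳 → ℝ}, (∀ x, f x ∈ Icc (0:ℝ) 1) → ∃ C, ∀ x, |f x| ≤ C :=
    fun hf01 => ⟨1, fun x => by simpa using norm_le_one_of_mem_Icc (hf01 x)⟩
  have hint : ∀ {f : 𝒳 → ℝ}, Measurable f → (∀ x, f x ∈ Icc (0:ℝ) 1) →
      Integrable (fun ω => f (X ω)) μ :=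
    fun hf hf01 => .of_mem_Icc 0 1 (hf.comp hX).aemeasurable (ae_of_all _ fun ω => hf01 _)
  have hpint : ∀ {f : 𝒳 → ℝ}, Measurable f → (∀ x, f x ∈ Icc (0:ℝ) 1) →
      Integrable (fun ω => p (X ω) * f (X ω)) μ :=
    fun hf hf01 => integrable_mul_of_mem_Icc (hp.comp hX).aemeasurable (hf.comp hX).aemeasurable
      (fun ω => hp01 _) (fun ω => hf01 _)
  have hΔ : Integrable (fun ω => d' (X ω) - d (X ω)) μ := (hint hd' hd'01).sub (hint hd hd01)
  have hpΔ : Integrable (fun ω => p (X ω) * d' (X ω) - p (X ω) * d (X ω)) μ :=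
    (hpint hd' hd'01).sub (hpint hd hd01)
  have hsplit : ∫ ω, (p (X ω) - c) * (d' (X ω) - d (X ω)) ∂μ
      = (∫ ω, p (X ω) * d' (X ω) ∂μ - ∫ ω, p (X ω) * d (X ω) ∂μ)
        - c * (∫ ω, d' (X ω) ∂μ - ∫ ω, d (X ω) ∂μ) := by
    rw [← integral_sub (hpint hd' hd'01) (hpint hd hd01),
      ← integral_sub (hint hd' hd'01) (hint hd hd01), ← integral_const_mul,
      ← integral_sub hpΔ (hΔ.const_mul c)]
    congr 1; ext ω; ring
  rw [integral_sub_const_mul_eq hΔ (hpΔ.congr (ae_of_all _ fun ω => (mul_sub _ _ _).symm))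
    hbal c] at hsplit
  rw [hrisk d hd (hbound hd01), hrisk d' hd' (hbound hd'01), hsplit]
  ring

end IsRiskScore

theorem stmt_15_general
    {Ω 𝒳 G : Type*} [MeasurableSpace Ω] [MeasurableSpace 𝒳]
    [Fintype G] [MeasurableSpace G] [MeasurableSingletonClass G]
    (μ : Measure Ω) [IsProbabilityMeasure μ]
    (X : Ω → 𝒳) (hX : Measurable X)
    (Y : Ω → ℝ) (hY : Measurable Y) (hY01 : ∀ ω, Y ω = 0 ∨ Y ω = 1)
    (p : 𝒳 → ℝ) (hp : Measurable p) (hp01 : ∀ x, p x ∈ Icc (0:ℝ) 1)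
    (hrisk : ∀ f : 𝒳 → ℝ, Measurable f → (∃ C, ∀ x, |f x| ≤ C) →
      ∫ ω, Y ω * f (X ω) ∂μ = ∫ ω, p (X ω) * f (X ω) ∂μ)
    (g : 𝒳 → G) (hg : Measurable g)
    (hdens : ∀ a : G,
      PosDensity01 (Measure.map (fun ω => p (X ω))
        (ProbabilityTheory.cond μ {ω | g (X ω) = a})))
    (c : ℝ) (hc1 : c < 1)
    (d : 𝒳 → ℝ) (hd : Measurable d) (hd01 : ∀ x, d x ∈ Icc (0:ℝ) 1)
    (hnotthr : ¬ ∃ t : G → ℝ, (∀ a : G, t a ∈ Icc (0:ℝ) 1) ∧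
      ∀ᵐ ω ∂μ, d (X ω) = (if t (g (X ω)) ≤ p (X ω) then (1:ℝ) else 0)) :
    ∃ d' : 𝒳 → ℝ, Measurable d' ∧ (∀ x, d' x ∈ Icc (0:ℝ) 1) ∧
      (∀ a : G, FPR μ X Y g d' a = FPR μ X Y g d a) ∧
      (∫ ω, Y ω * d (X ω) ∂μ) - c * ∫ ω, d (X ω) ∂μ
        < (∫ ω, Y ω * d' (X ω) ∂μ) - c * ∫ ω, d' (X ω) ∂μ := by
  replace hrisk : IsRiskScore μ X Y p := hrisk
  have hq : Measurable fun ω => p (X ω) := hp.comp hX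
  have hq01 : ∀ ω, p (X ω) ∈ Icc (0:ℝ) 1 := fun ω => hp01 (X ω)
  have hZ : Measurable fun ω => g (X ω) := hg.comp hX
  have he : Measurable fun ω => d (X ω) := hd.comp hX
  have he01 : ∀ ω, d (X ω) ∈ Icc (0:ℝ) 1 := fun ω => hd01 (X ω)
  have hatom : ∀ a x, ∀ᵐ ω ∂μ.restrict ((fun ω => g (X ω)) ⁻¹' {a}), p (X ω) ≠ x :=
    fun a x => ae_restrict_ne_of_map_cond_singleton hq (hZ (measurableSet_singleton a))
      ((hdens a).measure_singleton x)
  obtain ⟨t, ht01, hbal⟩ := exists_thresholdRule_balanced hZ hq hq01 he he01 hatom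
  have hd' := measurable_thresholdRule hg hp t
  have hd'01 := thresholdRule_mem_Icc g p t
  have hbal_total := integral_one_sub_mul_sub_eq_zero_of_forall hZ hq hq01 he he01
    (hd'.comp hX) (fun ω => hd'01 (X ω)) hbal
  have hgain := integral_mul_thresholdRule_sub_pos hZ hq hq01 he he01 hatom
    (fun a => (ht01 a).2) hbal fun h => hnotthr ⟨t, ht01, h⟩
  refine ⟨thresholdRule g p t, hd', hd'01, fun a => ?_, ?_⟩
  · exact hrisk.FPR_eq_of_setIntegral_eq_zero hX hY hY01 hp hp01 hg hd hd01 hd' hd'01 (hbal a)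
  · rw [← sub_pos, hrisk.utility_sub_eq hX hp hp01 hd hd01 hd' hd'01 hbal_total c]
    exact mul_pos (sub_pos.2 hc1) hgain

/-- if a decision rule `d` has group-wise false positive rates within `δ`
of each other, and `d` is not a.s. equal to any family of group-wise threshold rules,
then there is a decision rule `d'` with exactly the same group-wise false positive rates
(hence also satisfying the relaxed constraint) and strictly higher immediate utility. -/
theorem stmt_15
    {Ω 𝒳 G : Type*} [MeasurableSpace Ω] [MeasurableSpace 𝒳]
    [Fintype G] [MeasurableSpace G] [MeasurableSingletonClass G]
    (μ : Measure Ω) [IsProbabilityMeasure μ]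
    (X : Ω → 𝒳) (hX : Measurable X)
    (Y : Ω → ℝ) (hY : Measurable Y) (hY01 : ∀ ω, Y ω = 0 ∨ Y ω = 1)
    (p : 𝒳 → ℝ) (hp : Measurable p) (hp01 : ∀ x, p x ∈ Icc (0:ℝ) 1)
    (hrisk : ∀ f : 𝒳 → ℝ, Measurable f → (∃ C, ∀ x, |f x| ≤ C) →
      ∫ ω, Y ω * f (X ω) ∂μ = ∫ ω, p (X ω) * f (X ω) ∂μ)
    (g : 𝒳 → G) (hg : Measurable g)
    (hgpos : ∀ a : G, 0 < μ {ω | g (X ω) = a})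
    (hdens : ∀ a : G,
      PosDensity01 (Measure.map (fun ω => p (X ω))
        (ProbabilityTheory.cond μ {ω | g (X ω) = a})))
    (hY0pos : ∀ a : G, 0 < μ {ω | Y ω = 0 ∧ g (X ω) = a})
    (c : ℝ) (hc0 : 0 < c) (hc1 : c < 1)
    (δ : ℝ) (hδ : 0 ≤ δ)
    (d : 𝒳 → ℝ) (hd : Measurable d) (hd01 : ∀ x, d x ∈ Icc (0:ℝ) 1)
    (hδconstraint : ∀ a b : G, |FPR μ X Y g d a - FPR μ X Y g d b| ≤ δ)
    (hnotthr : ¬ ∃ t : G → ℝ, (∀ a : G, t a ∈ Icc (0:ℝ) 1) ∧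
      ∀ᵐ ω ∂μ, d (X ω) = (if t (g (X ω)) ≤ p (X ω) then (1:ℝ) else 0)) :
    ∃ d' : 𝒳 → ℝ, Measurable d' ∧ (∀ x, d' x ∈ Icc (0:ℝ) 1) ∧
      (∀ a : G, FPR μ X Y g d' a = FPR μ X Y g d a) ∧
      (∫ ω, Y ω * d (X ω) ∂μ) - c * ∫ ω, d (X ω) ∂μ
        < (∫ ω, Y ω * d' (X ω) ∂μ) - c * ∫ ω, d' (X ω) ∂μ :=
  stmt_15_general μ X hX Y hY hY01 p hp hp01 hrisk g hg hdens c hc1 d hd hd01 hnotthr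
end
end

section
/- Let P be a real random variable whose law has positive density on [0,1], and for α ∈ [0,1] let q(α) ∈ [0,1] be the unique value with P(P ≥ q(α)) = α. Then the function h(α) = E[P·1{P ≥ q(α)}] is strictly concave on [0,1]. -/
/-! Write `ν` for the law of `P`, so that `h α = ∫_{[q α, ∞)} t dν`. For `α < β` the increment
`h β - h α` is the first moment of `ν` on the band `[q β, q α)`, which has mass `β - α`; as `ν` has
no atoms, the increment lies strictly between `q β (β - α)` and `q α (β - α)`. Hence for
`x < y < z` the slope of `h` on `[x, y]` exceeds `q y`, which exceeds the slope on `[y, z]`: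
in effect `h' = q` is strictly decreasing. -/

open MeasureTheory ProbabilityTheory Set

noncomputable section

theorem integral_pos_of_ae_pos {α : Type*} [MeasurableSpace α] {μ : Measure α} [NeZero μ]
    {f : α → ℝ} (hf : ∀ᵐ x ∂μ, 0 < f x) (hfi : Integrable f μ) : 0 < ∫ x, f x ∂μ := by
  rw [integral_pos_iff_support_of_nonneg_ae (hf.mono fun _ h => h.le) hfi]
  refine pos_iff_ne_zero.2 fun h0 => NeZero.ne μ ?_
  have hzero : ∀ᵐ x ∂μ, f x = 0 := measure_eq_zero_iff_ae_notMem.1 h0 |>.mono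
    fun _ h => Function.notMem_support.1 h
  rw [← ae_eq_bot, ← Filter.eventually_false_iff_eq_bot]
  filter_upwards [hf, hzero] with x hpos hzero
  exact hpos.ne' hzero

section SetIntegralId

variable {ν : Measure ℝ} {a b : ℝ}

theorem mul_measureReal_Ico_lt_setIntegral_Ico [IsFiniteMeasure ν] [NullSingletonClass ν]
    (hint : Integrable (fun t : ℝ => t) ν) (hν : ν (Ico a b) ≠ 0) :
    a * ν.real (Ico a b) < ∫ t in Ico a b, t ∂ν := by
  have : NeZero (ν.restrict (Ico a b)) := ⟨by simpa using hν⟩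
  have hpos : ∀ᵐ t ∂ν.restrict (Ico a b), 0 < t - a := by
    filter_upwards [ae_restrict_mem measurableSet_Ico, ae_restrict_of_ae (Measure.ae_ne ν a)]
      with t ht hta using sub_pos.2 (lt_of_le_of_ne ht.1 hta.symm)
  have := integral_pos_of_ae_pos hpos (hint.integrableOn.sub (integrable_const a))
  rw [integral_sub hint.integrableOn (integrable_const a), setIntegral_const, smul_eq_mul]
    at this
  linarith

theorem setIntegral_Ico_lt_mul_measureReal_Ico [IsFiniteMeasure ν]
    (hint : Integrable (fun t : ℝ => t) ν) (hν : ν (Ico a b) ≠ 0) :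
    ∫ t in Ico a b, t ∂ν < b * ν.real (Ico a b) := by
  have : NeZero (ν.restrict (Ico a b)) := ⟨by simpa using hν⟩
  have hpos : ∀ᵐ t ∂ν.restrict (Ico a b), 0 < b - t := by
    filter_upwards [ae_restrict_mem measurableSet_Ico] with t ht using sub_pos.2 ht.2
  have := integral_pos_of_ae_pos hpos ((integrable_const b).sub hint.integrableOn)
  rw [integral_sub (integrable_const b) hint.integrableOn, setIntegral_const, smul_eq_mul]
    at this
  linarith

theorem lt_of_measureReal_Ici_lt [IsFiniteMeasure ν] (h : ν.real (Ici b) < ν.real (Ici a)) :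
    a < b :=
  lt_of_not_ge fun hba => h.not_ge (measureReal_mono (Ici_subset_Ici.2 hba))

theorem measureReal_Ici_sub_measureReal_Ici [IsFiniteMeasure ν] (hab : a ≤ b) :
    ν.real (Ici a) - ν.real (Ici b) = ν.real (Ico a b) := by
  rw [← Ici_sdiff_Ici, measureReal_sdiff (Ici_subset_Ici.2 hab) measurableSet_Ici]

theorem setIntegral_Ici_sub_setIntegral_Ici (hint : Integrable (fun t : ℝ => t) ν) (hab : a ≤ b) :
    ∫ t in Ici a, t ∂ν - ∫ t in Ici b, t ∂ν = ∫ t in Ico a b, t ∂ν := by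
  rw [← Ici_sdiff_Ici, setIntegral_sdiff measurableSet_Ici hint.integrableOn
    (Ici_subset_Ici.2 hab)]

theorem setIntegral_Ici_sub_mem_Ioo [IsFiniteMeasure ν] [NullSingletonClass ν]
    (hint : Integrable (fun t : ℝ => t) ν) (h : ν.real (Ici b) < ν.real (Ici a)) :
    ∫ t in Ici a, t ∂ν - ∫ t in Ici b, t ∂ν ∈
      Ioo (a * (ν.real (Ici a) - ν.real (Ici b))) (b * (ν.real (Ici a) - ν.real (Ici b))) := by
  have hab := (lt_of_measureReal_Ici_lt h).le
  have hν : ν (Ico a b) ≠ 0 := fun h0 => by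
    rw [← sub_pos, measureReal_Ici_sub_measureReal_Ici hab, measureReal_def, h0] at h
    simp at h
  rw [setIntegral_Ici_sub_setIntegral_Ici hint hab, measureReal_Ici_sub_measureReal_Ici hab]
  exact ⟨mul_measureReal_Ico_lt_setIntegral_Ico hint hν,
    setIntegral_Ico_lt_mul_measureReal_Ico hint hν⟩

end SetIntegralId

theorem strictConcaveOn_setIntegral_Ici {ν : Measure ℝ} [IsFiniteMeasure ν] [NullSingletonClass ν]
    (hint : Integrable (fun t : ℝ => t) ν) {s : Set ℝ} (hs : Convex ℝ s) {Q : ℝ → ℝ}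
    (hQ : ∀ α ∈ s, ν.real (Ici (Q α)) = α) :
    StrictConcaveOn ℝ s fun α => ∫ t in Ici (Q α), t ∂ν := by
  have increment : ∀ u ∈ s, ∀ v ∈ s, u < v →
      ∫ t in Ici (Q v), t ∂ν - ∫ t in Ici (Q u), t ∂ν ∈ Ioo (Q v * (v - u)) (Q u * (v - u)) :=
    fun u hu v hv huv => by
      simpa only [hQ u hu, hQ v hv] using
        setIntegral_Ici_sub_mem_Ioo hint (a := Q v) (b := Q u) (by rwa [hQ u hu, hQ v hv])
  refine strictConcaveOn_of_slope_strict_anti_adjacent hs fun {x y z} hx hz hxy hyz => ?_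
  have hy : y ∈ s := hs.ordConnected.out hx hz ⟨hxy.le, hyz.le⟩
  calc _ < Q y := (div_lt_iff₀ (sub_pos.2 hyz)).2 (increment y hy z hz hyz).2
    _ < _ := (lt_div_iff₀ (sub_pos.2 hxy)).2 (increment x hx y hy hxy).1

theorem PosDensity01.absolutelyContinuous {ν : Measure ℝ} (h : PosDensity01 ν) :
    ν ≪ volume := by
  obtain ⟨φ, rfl, -, -⟩ := h
  exact withDensity_absolutelyContinuous _ _

theorem PosDensity01.ae_mem_Icc {ν : Measure ℝ} (h : PosDensity01 ν) :
    ∀ᵐ x ∂ν, x ∈ Icc (0 : ℝ) 1 := by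
  obtain ⟨φ, rfl, -, hφ⟩ := h
  rw [ae_iff, ← compl_def, withDensity_apply _ measurableSet_Icc.compl]
  exact (setLIntegral_congr_fun_ae measurableSet_Icc.compl hφ).trans (by simp)

theorem integral_mul_ite_le_eq_setIntegral_map {Ω : Type*} [MeasurableSpace Ω] {μ : Measure Ω}
    {P : Ω → ℝ} (hP : Measurable P) (c : ℝ) :
    ∫ ω, P ω * (if c ≤ P ω then 1 else 0) ∂μ = ∫ t in Ici c, t ∂μ.map P := by
  rw [← integral_indicator measurableSet_Ici, integral_map hP.aemeasurable
    (measurable_id'.indicator measurableSet_Ici).aestronglyMeasurable]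
  congr with ω
  by_cases h : c ≤ P ω <;> simp [indicator, h]

/-- if `P` is a real random variable whose law has positive density on
`[0,1]` and, for `α ∈ [0,1]`, `q(α) ∈ [0,1]` is the (unique) value with
`P(P ≥ q(α)) = α`, then `h(α) = E[P·1{P ≥ q(α)}]` is strictly concave on `[0,1]`. -/
theorem stmt_19
    {Ω : Type*} [MeasurableSpace Ω]
    (μ : Measure Ω) [IsProbabilityMeasure μ]
    (P : Ω → ℝ) (hP : Measurable P)
    (hdens : PosDensity01 (Measure.map P μ))
    (q : ℝ → ℝ)
    (hq : ∀ α ∈ Icc (0:ℝ) 1, q α ∈ Icc (0:ℝ) 1 ∧ (μ {ω | q α ≤ P ω}).toReal = α) :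
    StrictConcaveOn ℝ (Icc (0:ℝ) 1)
      (fun α => ∫ ω, P ω * (if q α ≤ P ω then (1:ℝ) else 0) ∂μ) := by
  have : IsProbabilityMeasure (μ.map P) := Measure.isProbabilityMeasure_map hP.aemeasurable
  have : NullSingletonClass (μ.map P) :=
    ⟨fun _ => hdens.absolutelyContinuous Real.volume_singleton⟩
  have hint : Integrable (fun t : ℝ => t) (μ.map P) :=
    Integrable.of_bound measurable_id.aestronglyMeasurable 1 <| hdens.ae_mem_Icc.mono
      fun x hx => by rw [Real.norm_eq_abs, abs_le]; exact ⟨by linarith [hx.1], hx.2⟩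
  simp only [integral_mul_ite_le_eq_setIntegral_map hP]
  refine strictConcaveOn_setIntegral_Ici hint (convex_Icc 0 1) fun α hα => ?_
  rw [map_measureReal_apply hP measurableSet_Ici]
  exact (hq α hα).2
end
end
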